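/- For every word w over the alphabet with binders, disc(w) is disciplined: for every decomposition disc(w) = uv and every name a, if a ∈ lc(u) ∪ lo(u) then a ∈ rc(u), or (a ∈ rc(v) and a ∉ lc(v)). -/

import Mathlib

inductive Letter (A : Type) : Type
  | free : A → Letter A
  | op   : A → Letter A
  | cl   : A → Letter A
  | both : A → Letter A

open scoped Classical

noncomputable def lo {A : Type} : List (Letter A) → Set A
  | [] => ∅
  | Letter.free a :: w => lo w ∪ {a}
  | Letter.op a :: w => lo w \ {a}
  | Letter.cl a :: w => lo w ∪ {a}
  | Letter.both a :: w => lo w \ {a}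

noncomputable def lc {A : Type} : List (Letter A) → Set A
  | [] => ∅
  | Letter.free a :: w => lc w \ {a}
  | Letter.op a :: w => lc w ∪ {a}
  | Letter.cl a :: w => lc w \ {a}
  | Letter.both a :: w => lc w ∪ {a}

noncomputable def rc {A : Type} : List (Letter A) → Set A
  | [] => ∅
  | Letter.free _ :: w => rc w
  | Letter.op _ :: w => rc w
  | Letter.cl a :: w => if a ∈ lc w ∪ lo w then rc w else rc w ∪ {a}
  | Letter.both a :: w => if a ∈ lc w ∪ lo w then rc w else rc w ∪ {a}

def RNS {A : Type} (w : List (Letter A)) : Prop :=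
  ∀ u v : List (Letter A), w = u ++ v → rc u ∩ lo v = ∅

noncomputable def disc {A : Type} : List (Letter A) → List (Letter A)
  | [] => []
  | Letter.free a :: w => if a ∈ lo w then Letter.free a :: disc w else Letter.cl a :: disc w
  | Letter.op a :: w => if a ∈ lo w then Letter.op a :: disc w else Letter.both a :: disc w
  | Letter.cl a :: w => Letter.cl a :: disc w
  | Letter.both a :: w => Letter.both a :: disc w

def Disciplined {A : Type} (x : List (Letter A)) : Prop :=
  ∀ u v : List (Letter A), x = u ++ v →
    ∀ a : A, a ∈ lc u ∪ lo u → a ∈ rc u ∨ (a ∈ rc v ∧ a ∉ lc v)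

/-!
`disc` turns a free or opening occurrence of `a` into its closed counterpart exactly when `a` is
not left-open further to the right. This changes neither `lo` nor `lc`, makes every name of
`lc s ∪ lo s` right-closed in `disc s`, and suffixes of `disc w` are again of the form `disc s`.
Now induct along the word: in `c :: x = (c :: u) ++ v` the only name of `lc ∪ lo` of the prefix not
already in `lc u ∪ lo u` is that of `c`. It is right-closed by `c` itself when `c` is closing;
otherwise it is left-open in `x` but not in `u`, hence left-open in `v`, so right-closed and not
left-closed in `v`.
-/

variable {A : Type}

def Letter.name : Letter A → A
  | free a => a
  | op a => a
  | cl a => a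
  | both a => a

def Letter.IsClosing : Letter A → Prop
  | cl _ => True
  | both _ => True
  | _ => False

lemma mem_lc_union_lo_cons {c : Letter A} {w : List (Letter A)} {a : A}
    (h : a ∈ lc (c :: w) ∪ lo (c :: w)) : a = c.name ∨ a ∈ lc w ∪ lo w := by
  cases c <;> simp only [lc, lo, Letter.name, Set.mem_union, Set.mem_sdiff,
    Set.mem_singleton_iff] at h ⊢ <;> tauto

lemma rc_subset_rc_cons (c : Letter A) (w : List (Letter A)) : rc w ⊆ rc (c :: w) := by
  cases c <;> simp only [rc, subset_rfl] <;> split_ifs <;> simp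

lemma Letter.IsClosing.name_mem_rc_cons {c : Letter A} (hc : c.IsClosing) {w : List (Letter A)}
    (h : c.name ∉ lc w ∪ lo w) : c.name ∈ rc (c :: w) := by
  cases c <;> simp_all [Letter.IsClosing, Letter.name, rc]

lemma lo_append_subset (x y : List (Letter A)) : lo (x ++ y) ⊆ lo x ∪ lo y := by
  induction x with
  | nil => simp [lo]
  | cons c x ih =>
    intro a ha
    have ih_a := @ih a
    cases c <;> simp only [List.cons_append, lo, Set.mem_union, Set.mem_sdiff,
      Set.mem_singleton_iff] at ha ih_a ⊢ <;> tauto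

lemma disjoint_lo_lc (w : List (Letter A)) : Disjoint (lo w) (lc w) := by
  induction w with
  | nil => simp [lo]
  | cons c w ih =>
    cases c <;> simp only [lo, lc, Set.disjoint_left, Set.mem_union, Set.mem_sdiff,
      Set.mem_singleton_iff] at ih ⊢ <;> grind

theorem Disciplined.cons {c : Letter A} {x : List (Letter A)} (hx : Disciplined x)
    (hsuf : ∀ v, v <:+ x → lo v ⊆ rc v) (hc : c.IsClosing ∨ c.name ∈ lo x) :
    Disciplined (c :: x) := by
  rintro (_ | ⟨d, u⟩) v huv a ha
  · simp [lc, lo] at ha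
  obtain ⟨rfl, rfl⟩ : c = d ∧ x = u ++ v := by simpa using huv
  by_cases hau : a ∈ lc u ∪ lo u
  · exact (hx u v rfl a hau).imp_left (rc_subset_rc_cons c u ·)
  obtain rfl : a = c.name := (mem_lc_union_lo_cons ha).resolve_right hau
  rcases hc with hclosing | hlo
  · exact Or.inl (hclosing.name_mem_rc_cons hau)
  · have hav : c.name ∈ lo v := (lo_append_subset u v hlo).resolve_left fun h => hau (Or.inr h)
    exact Or.inr ⟨hsuf v (List.suffix_append u v) hav, Set.disjoint_left.mp (disjoint_lo_lc v) hav⟩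

lemma disc_cons (c : Letter A) (t : List (Letter A)) :
    ∃ c' : Letter A, disc (c :: t) = c' :: disc t ∧ c'.name = c.name ∧
      (c'.IsClosing ∨ c.name ∈ lo t) := by
  cases c with
  | free a =>
    by_cases h : a ∈ lo t
    · exact ⟨.free a, by simp [disc, h], rfl, Or.inr h⟩
    · exact ⟨.cl a, by simp [disc, h], rfl, Or.inl trivial⟩
  | op a =>
    by_cases h : a ∈ lo t
    · exact ⟨.op a, by simp [disc, h], rfl, Or.inr h⟩
    · exact ⟨.both a, by simp [disc, h], rfl, Or.inl trivial⟩
  | cl a | both a => exact ⟨_, rfl, rfl, Or.inl trivial⟩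

lemma lo_disc (s : List (Letter A)) : lo (disc s) = lo s := by
  induction s with
  | nil => rfl
  | cons c t ih =>
    cases c <;> simp only [disc] <;> try split_ifs
    all_goals simp [lo, ih]

lemma lc_disc (s : List (Letter A)) : lc (disc s) = lc s := by
  induction s with
  | nil => rfl
  | cons c t ih =>
    cases c <;> simp only [disc] <;> try split_ifs
    all_goals simp [lc, ih]

lemma lc_union_lo_subset_rc_disc (s : List (Letter A)) : lc s ∪ lo s ⊆ rc (disc s) := by
  induction s with
  | nil => simp [lc, lo]
  | cons c t ih =>
    obtain ⟨c', hdisc, hname, hc'⟩ := disc_cons c t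
    intro a ha
    rw [hdisc]
    by_cases hat : a ∈ lc t ∪ lo t
    · exact rc_subset_rc_cons c' _ (ih hat)
    obtain rfl : a = c.name := (mem_lc_union_lo_cons ha).resolve_right hat
    have hclosing : c'.IsClosing := hc'.resolve_right fun h => hat (Or.inr h)
    rw [← hname] at hat ⊢
    exact hclosing.name_mem_rc_cons (by rwa [lc_disc, lo_disc])

lemma exists_eq_disc_of_suffix {v : List (Letter A)} :
    ∀ {t : List (Letter A)}, v <:+ disc t → ∃ s, v = disc s
  | [], h => ⟨[], List.eq_nil_of_suffix_nil h⟩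
  | c :: t, h => by
    obtain ⟨c', hdisc, -⟩ := disc_cons c t
    rw [hdisc, List.suffix_cons_iff] at h
    exact h.elim (fun h => ⟨c :: t, h.trans hdisc.symm⟩) exists_eq_disc_of_suffix

theorem disc_disciplined {A : Type} (w : List (Letter A)) : Disciplined (disc w) := by
  induction w with
  | nil => rintro u v huv a ha; simp_all [disc, lc, lo]
  | cons c t ih =>
    obtain ⟨c', hdisc, hname, hc'⟩ := disc_cons c t
    rw [hdisc]
    refine ih.cons (fun v hv => ?_) (by rwa [hname, lo_disc])
    obtain ⟨s, rfl⟩ := exists_eq_disc_of_suffix hv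
    exact lo_disc s ▸ Set.subset_union_right.trans (lc_union_lo_subset_rc_disc s)
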